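/- Let Θ = x₁x₂(x₁-x₂)(x₁+x₂) and Δ_t = (x₁ - t x₂)(x₁ - f(t)x₂) with f(t)=(t-1)/(t+1). Then β₁₂ = (Θ, Δ_t²)₄ = ½ (t²+2t-1)(t²-2t-1)/(t+1)². -/

import Mathlib

/-!
Every `n`-th order partial derivative of a binary `n`-ic is a constant, namely `(n-q)! q!` times
the coefficient of `x₁^(n-q) x₂^q`. Hence the `n`-th transvectant of two binary `n`-ics with
coefficients `a`, `b` is the apolar pairing `∑ (-1)^i a_i b_(n-i) / C(n,i)`. The quartic
`Θ = x₁³x₂ - x₁x₂³` has only two nonzero coefficients, so pairing it with the square of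
`(x₁ - a x₂)(x₁ - b x₂)` gives `(a+b)(ab-1)/2`; substituting `a = t`, `b = (t-1)/(t+1)`
gives `β₁₂`.
-/

open MvPolynomial

/-- The `r`-th transvectant of binary forms `A` (degree `m`) and `B` (degree `n`):
`(A,B)_r = ((m-r)!(n-r)!/(m!n!)) Σ_{i=0}^r (-1)^i C(r,i)
  (∂^r A/∂x₁^{r-i}∂x₂^i)(∂^r B/∂x₁^i∂x₂^{r-i})`. -/
noncomputable def transv (m n r : ℕ) (A B : MvPolynomial (Fin 2) ℂ) :
    MvPolynomial (Fin 2) ℂ :=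
  (((m - r).factorial * (n - r).factorial : ℂ) / ((m.factorial : ℂ) * (n.factorial : ℂ))) •
    ∑ i ∈ Finset.range (r + 1),
      ((-1 : ℂ) ^ i * (r.choose i : ℂ)) •
        (((pderiv (0 : Fin 2))^[r - i] ((pderiv (1 : Fin 2))^[i] A)) *
          ((pderiv (0 : Fin 2))^[i] ((pderiv (1 : Fin 2))^[r - i] B)))

/-- The binary quartic `Θ = x₁x₂(x₁-x₂)(x₁+x₂)`. -/
noncomputable def Theta : MvPolynomial (Fin 2) ℂ :=
  X 0 * X 1 * (X 0 - X 1) * (X 0 + X 1)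

/-- The binary quadratic `Δ_t = (x₁ - t x₂)(x₁ - f(t) x₂)` with `f(t) = (t-1)/(t+1)`. -/
noncomputable def Delta (t : ℂ) : MvPolynomial (Fin 2) ℂ :=
  (X 0 - C t * X 1) * (X 0 - C ((t - 1) / (t + 1)) * X 1)

namespace MvPolynomial

variable {R σ : Type*} [CommSemiring R]

theorem iterate_pderiv_X_pow (i : σ) (n k : ℕ) :
    (pderiv i)^[k] (X i ^ n : MvPolynomial σ R) =
      (n.descFactorial k : MvPolynomial σ R) * X i ^ (n - k) := by
  induction k with
  | zero => simp
  | succ k ih =>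
    rw [Function.iterate_succ_apply', ih, Derivation.leibniz, pderiv_pow, pderiv_X_self,
      Derivation.map_natCast, smul_zero, add_zero, smul_eq_mul, Nat.descFactorial_succ, Nat.sub_sub]
    push_cast
    ring

theorem iterate_pderiv_mul_of_pderiv_eq_zero {i : σ} {f : MvPolynomial σ R} (hf : pderiv i f = 0)
    (k : ℕ) (g : MvPolynomial σ R) : (pderiv i)^[k] (f * g) = f * (pderiv i)^[k] g := by
  induction k with
  | zero => rfl
  | succ k ih => rw [Function.iterate_succ_apply', ih, pderiv_mul, hf, zero_mul, zero_add,
      Function.iterate_succ_apply']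

theorem iterate_pderiv_sum {ι : Type*} (i : σ) (k : ℕ) (s : Finset ι)
    (f : ι → MvPolynomial σ R) :
    (pderiv i)^[k] (∑ j ∈ s, f j) = ∑ j ∈ s, (pderiv i)^[k] (f j) := by
  simpa only [Module.End.pow_apply, Derivation.coeFn_coe] using
    map_sum ((pderiv i).toLinearMap ^ k) f s

theorem iterate_pderiv_C_mul (i : σ) (k : ℕ) (a : R) (f : MvPolynomial σ R) :
    (pderiv i)^[k] (C a * f) = C a * (pderiv i)^[k] f :=
  iterate_pderiv_mul_of_pderiv_eq_zero pderiv_C k f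

theorem iterate_pderiv_iterate_pderiv_X_pow_mul_X_pow {i j : σ} (hij : i ≠ j) (p q a b : ℕ) :
    (pderiv i)^[a] ((pderiv j)^[b] (X i ^ p * X j ^ q : MvPolynomial σ R)) =
      ((p.descFactorial a * q.descFactorial b : ℕ) : MvPolynomial σ R) *
        X i ^ (p - a) * X j ^ (q - b) := by
  have hXi : pderiv j (X i ^ p : MvPolynomial σ R) = 0 := by simp [pderiv_X_of_ne hij]
  have hXj : pderiv i ((q.descFactorial b : MvPolynomial σ R) * X j ^ (q - b)) = 0 := by
    simp [pderiv_X_of_ne hij.symm]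
  rw [iterate_pderiv_mul_of_pderiv_eq_zero hXi, iterate_pderiv_X_pow, mul_comm,
    iterate_pderiv_mul_of_pderiv_eq_zero hXj, iterate_pderiv_X_pow]
  push_cast
  ring

end MvPolynomial

noncomputable def binaryForm (n : ℕ) (a : Fin (n + 1) → ℂ) : MvPolynomial (Fin 2) ℂ :=
  ∑ k : Fin (n + 1), C (a k) * (X 0 ^ (n - k) * X 1 ^ (k : ℕ))

theorem iterate_pderiv_binaryForm {n p : ℕ} (a : Fin (n + 1) → ℂ) (q : Fin (n + 1))
    (hpq : p + q = n) :
    (pderiv 0)^[p] ((pderiv 1)^[q] (binaryForm n a)) =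
      C (a q * (p.factorial * (q : ℕ).factorial)) := by
  simp only [binaryForm, iterate_pderiv_sum, iterate_pderiv_C_mul,
    iterate_pderiv_iterate_pderiv_X_pow_mul_X_pow (show (0 : Fin 2) ≠ 1 by decide)]
  rw [Finset.sum_eq_single q]
  · rw [show n - q = p by omega, Nat.descFactorial_self, Nat.descFactorial_self]
    simp
  · intro k _ hkq
    rcases lt_or_gt_of_ne (Fin.val_ne_of_ne hkq) with hlt | hgt
    · simp [Nat.descFactorial_eq_zero_iff_lt.mpr hlt]
    · simp [Nat.descFactorial_eq_zero_iff_lt.mpr (show n - k < p by omega)]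
  · simp

theorem transv_binaryForm (n : ℕ) (a b : Fin (n + 1) → ℂ) :
    transv n n n (binaryForm n a) (binaryForm n b) =
      C (∑ i : Fin (n + 1), (-1) ^ (i : ℕ) * a i * b i.rev / n.choose i) := by
  have hA (i : Fin (n + 1)) : (pderiv 0)^[n - i] ((pderiv 1)^[i] (binaryForm n a)) =
      C (a i * ((n - i).factorial * (i : ℕ).factorial)) :=
    iterate_pderiv_binaryForm a i (by omega)
  have hB (i : Fin (n + 1)) : (pderiv 0)^[i] ((pderiv 1)^[n - i] (binaryForm n b)) =
      C (b i.rev * ((i : ℕ).factorial * (n - i).factorial)) := by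
    rw [show n - i = (i.rev : ℕ) by simp [Fin.val_rev]]
    exact iterate_pderiv_binaryForm b i.rev (by simp [Fin.val_rev]; omega)
  simp only [transv, Nat.sub_self, Nat.factorial_zero, Finset.sum_range, hA, hB, smul_eq_C_mul,
    ← map_mul, ← map_sum, Finset.mul_sum]
  congr 1
  refine Finset.sum_congr rfl fun i _ => ?_
  have hchoose := Nat.choose_mul_factorial_mul_factorial (Nat.le_of_lt_succ i.isLt)
  have hchoose_ne : (n.choose i : ℂ) ≠ 0 := by exact_mod_cast (Nat.choose_pos (by omega)).ne'
  have hi : ((i : ℕ).factorial : ℂ) ≠ 0 := Nat.cast_ne_zero.mpr (Nat.factorial_ne_zero _)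
  have hni : ((n - i).factorial : ℂ) ≠ 0 := Nat.cast_ne_zero.mpr (Nat.factorial_ne_zero _)
  rw [← hchoose]
  push_cast
  field_simp

theorem binaryForm_four (a : Fin 5 → ℂ) :
    binaryForm 4 a = C (a 0) * X 0 ^ 4 + C (a 1) * (X 0 ^ 3 * X 1) + C (a 2) * (X 0 ^ 2 * X 1 ^ 2) +
      C (a 3) * (X 0 * X 1 ^ 3) + C (a 4) * X 1 ^ 4 := by
  simp [binaryForm, Fin.sum_univ_five]

theorem Theta_eq_binaryForm : Theta = binaryForm 4 ![0, 1, 0, -1, 0] := by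
  rw [binaryForm_four, Theta]
  simp only [Matrix.cons_val, C_0, C_1, C_neg]
  ring

theorem sq_quadratic_eq_binaryForm (a b : ℂ) :
    ((X 0 - C a * X 1) * (X 0 - C b * X 1)) ^ 2 =
      binaryForm 4
        ![1, -2 * (a + b), (a + b) ^ 2 + 2 * a * b, -2 * a * b * (a + b), a ^ 2 * b ^ 2] := by
  rw [binaryForm_four]
  simp only [Matrix.cons_val, map_add, map_mul, map_neg, map_pow, map_one, map_ofNat]
  ring

theorem transv_Theta_sq_quadratic (a b : ℂ) :
    transv 4 4 4 Theta (((X 0 - C a * X 1) * (X 0 - C b * X 1)) ^ 2) =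
      C ((a + b) * (a * b - 1) / 2) := by
  rw [Theta_eq_binaryForm, sq_quadratic_eq_binaryForm, transv_binaryForm, Fin.sum_univ_five]
  congr 1
  simp only [Fin.reduceRev, Matrix.cons_val, Fin.isValue, Fin.val_zero, Fin.val_one, Fin.val_two]
  norm_num [Nat.choose]
  ring

/-- `β₁₂ = (Θ, Δ_t²)₄ = ½ (t²+2t-1)(t²-2t-1)/(t+1)²` for `t ≠ -1`. -/
theorem beta12_formula (t : ℂ) (ht : t ≠ -1) :
    transv 4 4 4 Theta (Delta t ^ 2) =
      C ((1 / 2) * (t ^ 2 + 2 * t - 1) * (t ^ 2 - 2 * t - 1) / (t + 1) ^ 2 : ℂ) := by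
  have ht1 : t + 1 ≠ 0 := fun h => ht (by linear_combination h)
  rw [Delta, transv_Theta_sq_quadratic]
  congr 1
  field_simp
  ring
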